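/- arXiv:2306.11115 — 4 statements merged into one kernel-verified Lean document; each statement's English description precedes it below -/
import Mathlib

section
/- The derivative of the corner-counting generating function at t = 1 satisfies [∂_t P(x,t)]_{t=1} = P(x)/(1-x), where P(x) = ∏_{k≥1}(1-x^k)^{-1} is the partition generating function. Equivalently, the total number of corners over all partitions of n equals Σ_{k≤n} p(k). -/
open Finset

/-- Number of corners of a partition: number of distinct parts plus one. -/
def corners {m : ℕ} (μ : Nat.Partition m) : ℕ := μ.parts.toFinset.card + 1

/-- Remove one copy of part `j` from a partition of `n`. -/
def erasePart {n : ℕ} (j : ℕ) (μ : Nat.Partition n) (h : j ∈ μ.parts) :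
    Nat.Partition (n - j) where
  parts := μ.parts.erase j
  parts_pos := fun hi => μ.parts_pos (Multiset.mem_of_mem_erase hi)
  parts_sum := by
    have h1 : j ::ₘ μ.parts.erase j = μ.parts := Multiset.cons_erase h
    have h2 := congrArg Multiset.sum h1
    rw [Multiset.sum_cons, μ.parts_sum] at h2
    omega

/-- Add a part `j` to a partition of `n - j`. -/
def insertPart {n j : ℕ} (hj : 0 < j) (hjn : j ≤ n) (ν : Nat.Partition (n - j)) :
    Nat.Partition n where
  parts := j ::ₘ ν.parts
  parts_pos := by
    intro i hi
    rcases Multiset.mem_cons.1 hi with rfl | h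
    · exact hj
    · exact ν.parts_pos h
  parts_sum := by
    rw [Multiset.sum_cons, ν.parts_sum]
    omega

lemma card_contains (n j : ℕ) (hj : 0 < j) (hjn : j ≤ n) :
    ((Finset.univ : Finset (Nat.Partition n)).filter (fun μ => j ∈ μ.parts)).card
      = Fintype.card (Nat.Partition (n - j)) := by
  rw [← Finset.card_univ]
  refine Finset.card_bij' (fun μ hμ => erasePart j μ (by simpa using hμ))
    (fun ν _ => insertPart hj hjn ν) ?_ ?_ ?_ ?_
  · intro μ hμ; exact Finset.mem_univ _
  · intro ν _
    simp only [Finset.mem_filter, Finset.mem_univ, true_and, insertPart]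
    exact Multiset.mem_cons_self _ _
  · intro μ hμ
    ext1
    simp only [insertPart, erasePart]
    exact Multiset.cons_erase (by simpa using hμ)
  · intro ν _
    ext1
    simp only [insertPart, erasePart]
    exact Multiset.erase_cons_head _ _

lemma toFinset_eq {n : ℕ} (μ : Nat.Partition n) :
    μ.parts.toFinset = (Finset.Icc 1 n).filter (fun j => j ∈ μ.parts) := by
  ext j
  simp only [Multiset.mem_toFinset, Finset.mem_filter, Finset.mem_Icc]
  constructor
  · intro h
    refine ⟨⟨μ.parts_pos h, ?_⟩, h⟩
    calc j ≤ μ.parts.sum := Multiset.single_le_sum (fun x _ => Nat.zero_le x) _ h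
    _ = n := μ.parts_sum
  · exact fun h => h.2

/-- `[∂ₜ P(x,t)]_{t=1} = P(x)/(1-x)`, equivalently: the total number of
corners over all partitions of `n` equals `Σ_{k ≤ n} p(k)`, where `p(k)` is the number
of partitions of `k`. -/
theorem total_corners_eq_sum_partition_counts (n : ℕ) :
    ∑ μ : Nat.Partition n, corners μ =
      ∑ k ∈ Finset.range (n + 1), Fintype.card (Nat.Partition k) := by
  have key : ∑ μ : Nat.Partition n, μ.parts.toFinset.card
      = ∑ k ∈ Finset.range n, Fintype.card (Nat.Partition k) := by
    have h1 : ∀ μ : Nat.Partition n, μ.parts.toFinset.card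
        = ∑ j ∈ Finset.Icc 1 n, if j ∈ μ.parts then 1 else 0 := by
      intro μ
      rw [toFinset_eq, Finset.card_filter]
    calc ∑ μ : Nat.Partition n, μ.parts.toFinset.card
        = ∑ μ : Nat.Partition n, ∑ j ∈ Finset.Icc 1 n, if j ∈ μ.parts then 1 else 0 := by
          simp_rw [h1]
      _ = ∑ j ∈ Finset.Icc 1 n, ∑ μ : Nat.Partition n, if j ∈ μ.parts then 1 else 0 :=
          Finset.sum_comm
      _ = ∑ j ∈ Finset.Icc 1 n, Fintype.card (Nat.Partition (n - j)) := by
          refine Finset.sum_congr rfl fun j hj => ?_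
          rw [Finset.mem_Icc] at hj
          rw [← card_contains n j hj.1 hj.2, Finset.card_filter]
      _ = ∑ k ∈ Finset.range n, Fintype.card (Nat.Partition k) := by
          refine Finset.sum_bij' (fun j _ => n - j) (fun k _ => n - k) ?_ ?_ ?_ ?_ ?_
          · intro j hj; rw [Finset.mem_Icc] at hj; simp only [Finset.mem_range]; omega
          · intro k hk; rw [Finset.mem_range] at hk; simp only [Finset.mem_Icc]; omega
          · intro j hj; rw [Finset.mem_Icc] at hj; omega
          · intro k hk; rw [Finset.mem_range] at hk; omega
          · intro j _; rfl
  simp only [corners]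
  rw [Finset.sum_add_distrib, key, Finset.sum_const, Finset.card_univ, smul_eq_mul, mul_one,
    Finset.sum_range_succ]
end

section
/- Euler's identity: Σ_{n≥0} (-z)^n · q^{n(n-1)/2} / ((1-q)(1-q²)···(1-q^n)) = ∏_{k≥0} (1 - z q^k), as an identity of formal power series in q and z. -/
/-! Write `P_N(z) = ∏_{k<N} (1 - z q^k)`. The functional equation `P_{N+1}(z) = (1 - z) P_N(q z)`
gives the recursion `c_{N+1,n+1} = q^{n+1} c_{N,n+1} - q^n c_{N,n}` for the `z^n`-coefficients
of `P_N`, and Euler's coefficients `a_n` satisfy the same relation in `n` because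
`(1 - q^{n+1}) a_{n+1} = -q^n a_n`. Induction on `N` then shows that `c_{N,n}` and `a_n` agree in
every `q`-degree `m` with `m + n ≤ N + n(n-1)/2`, which covers all `m < N`. -/

open PowerSeries Finset

/-- The variable `q`, as a formal power series over `ℚ`. -/
noncomputable abbrev qvar : PowerSeries ℚ := PowerSeries.X

/-- The left-hand side of Euler's identity, a formal power series in `z` (the outer
variable) with coefficients formal power series in `q`: the coefficient of `z^n` is
`(-1)^n q^{n(n-1)/2} / (q;q)_n`, where `(q;q)_n = ∏_{j=1}^n (1-q^j)` (its inverse is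
taken via `Ring.inverse`, which is the genuine inverse since `(q;q)_n` is a unit). -/
noncomputable def eulerLHS : PowerSeries (PowerSeries ℚ) :=
  PowerSeries.mk fun n =>
    (-1 : PowerSeries ℚ) ^ n * qvar ^ (n * (n - 1) / 2) *
      Ring.inverse (∏ j ∈ Finset.Icc 1 n, (1 - qvar ^ j))

/-- The truncation `∏_{k=0}^{N-1} (1 - z q^k)` of the infinite product `(z;q)_∞`. -/
noncomputable def eulerRHS (N : ℕ) : PowerSeries (PowerSeries ℚ) :=
  ∏ k ∈ Finset.range N, (1 - PowerSeries.C (qvar ^ k) * PowerSeries.X)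

namespace PowerSeries

variable {R : Type*} [CommRing R]

theorem rescale_one_sub_C_mul_X (a b : R) : rescale a (1 - C b * X) = 1 - C (b * a) * X := by
  ext (_ | _ | n) <;> rw [coeff_rescale] <;> simp [coeff_X, mul_comm]

theorem prod_range_succ_one_sub_C_pow_mul_X (a : R) (N : ℕ) :
    ∏ k ∈ range (N + 1), (1 - C (a ^ k) * X) =
      (1 - X) * rescale a (∏ k ∈ range N, (1 - C (a ^ k) * X)) := by
  simp only [prod_range_succ', map_prod, rescale_one_sub_C_mul_X, ← pow_succ, pow_zero, map_one,
    one_mul]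
  exact mul_comm _ _

theorem coeff_zero_prod_one_sub_C_mul_X (s : Finset ℕ) (b : ℕ → R) :
    coeff 0 (∏ k ∈ s, (1 - C (b k) * X)) = 1 := by
  simp [coeff_zero_eq_constantCoeff, map_prod]

theorem coeff_succ_prod_range_succ_one_sub_C_pow_mul_X (a : R) (N n : ℕ) :
    coeff (n + 1) (∏ k ∈ range (N + 1), (1 - C (a ^ k) * X)) =
      a ^ (n + 1) * coeff (n + 1) (∏ k ∈ range N, (1 - C (a ^ k) * X)) -
        a ^ n * coeff n (∏ k ∈ range N, (1 - C (a ^ k) * X)) := by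
  rw [prod_range_succ_one_sub_C_pow_mul_X, sub_mul, one_mul, map_sub, coeff_succ_X_mul,
    coeff_rescale, coeff_rescale]

theorem isUnit_one_sub_X_pow {n : ℕ} (hn : n ≠ 0) : IsUnit (1 - X ^ n : R⟦X⟧) := by
  simp [isUnit_iff_constantCoeff, zero_pow hn]

end PowerSeries

noncomputable def eulerCoeff (R : Type*) [CommRing R] (n : ℕ) : R⟦X⟧ :=
  (-1) ^ n * X ^ (n * (n - 1) / 2) * Ring.inverse (∏ j ∈ Icc 1 n, (1 - X ^ j))

section eulerCoeff

variable {R : Type*} [CommRing R]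

theorem eulerCoeff_zero : eulerCoeff R 0 = 1 := by
  simp [eulerCoeff]

theorem coeff_eulerCoeff_of_lt {n m : ℕ} (h : m < n * (n - 1) / 2) :
    coeff m (eulerCoeff R n) = 0 := by
  rw [eulerCoeff, mul_right_comm, mul_comm, coeff_X_pow_mul', if_neg h.not_ge]

theorem one_sub_X_pow_mul_eulerCoeff_succ (n : ℕ) :
    (1 - X ^ (n + 1)) * eulerCoeff R (n + 1) = -(X ^ n * eulerCoeff R n) := by
  have hinv : (1 - X ^ (n + 1)) * Ring.inverse (1 - X ^ (n + 1) : R⟦X⟧) = 1 :=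
    Ring.mul_inverse_cancel _ (isUnit_one_sub_X_pow n.succ_ne_zero)
  rw [eulerCoeff, eulerCoeff, prod_Icc_succ_top (by omega), Ring.mul_inverse_rev,
    Nat.triangle_succ, pow_add X (n * (n - 1) / 2) n]
  linear_combination (-1) ^ (n + 1) * X ^ (n * (n - 1) / 2) * X ^ n *
    Ring.inverse (∏ j ∈ Icc 1 n, (1 - X ^ j : R⟦X⟧)) * hinv

theorem eulerCoeff_succ (n : ℕ) :
    eulerCoeff R (n + 1) = X ^ (n + 1) * eulerCoeff R (n + 1) - X ^ n * eulerCoeff R n := by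
  linear_combination one_sub_X_pow_mul_eulerCoeff_succ (R := R) n

end eulerCoeff

theorem coeff_coeff_prod_range_eq_coeff_eulerCoeff {R : Type*} [CommRing R] :
    ∀ {N n m : ℕ}, m + n ≤ N + n * (n - 1) / 2 →
      coeff m (coeff n (∏ k ∈ range N, (1 - C (X ^ k : R⟦X⟧) * X))) = coeff m (eulerCoeff R n)
  | _, 0, _, _ => by rw [coeff_zero_prod_one_sub_C_mul_X, eulerCoeff_zero]
  | 0, n + 1, m, h => by
    rw [prod_range_zero, coeff_one, if_neg n.succ_ne_zero, map_zero,
      coeff_eulerCoeff_of_lt (by omega)]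
  | N + 1, n + 1, m, h => by
    have := Nat.triangle_succ n
    rw [coeff_succ_prod_range_succ_one_sub_C_pow_mul_X, eulerCoeff_succ, map_sub, map_sub,
      coeff_X_pow_mul', coeff_X_pow_mul', coeff_X_pow_mul', coeff_X_pow_mul']
    congr 1 <;> split_ifs
    · exact coeff_coeff_prod_range_eq_coeff_eulerCoeff (by omega)
    · rfl
    · exact coeff_coeff_prod_range_eq_coeff_eulerCoeff (by omega)
    · rfl

/-- Euler's identity:
`Σ_{n≥0} (-z)^n q^{n(n-1)/2}/((1-q)⋯(1-q^n)) = ∏_{k≥0} (1 - z q^k)` as formal power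
series in `q` and `z`; coefficientwise (in `z^n q^m`), the infinite product stabilizes
once the truncation has `N > m` factors. -/
theorem euler_q_identity :
    ∀ n m N : ℕ, m < N →
      PowerSeries.coeff m (PowerSeries.coeff n (eulerRHS N)) =
        PowerSeries.coeff m (PowerSeries.coeff n eulerLHS) := by
  intro n m N hmN
  have hn : n ≤ n * (n - 1) / 2 + 1 := by
    cases n with
    | zero => simp
    | succ n => rw [Nat.triangle_succ]; omega
  rw [eulerRHS, eulerLHS, coeff_mk]
  exact coeff_coeff_prod_range_eq_coeff_eulerCoeff (by omega)
end

section
/- For a partition λ with spectral function T_λ(u) = ∏_{s∈λ} N(u-[s]), where N(u) = (u-[0,0])(u-[1,1])/((u-[1,0])(u-[0,1])), the poles and zeros cancel along the profile so that T_λ(u) = u · ∏_{t ∈ R⁺_λ}(u-[t]) / ∏_{s ∈ A_λ}(u-[s]), where A_λ is the set of addable boxes (inner corners) of λ and R⁺_λ is the set of outer corners (boxes t+(1,1) for removable boxes t). -/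
noncomputable section

/-- The coefficient field `ℂ(ε₁,ε₂)`, realized as the fraction field of a polynomial
ring in two (transcendental) variables. -/
abbrev Kf : Type := FractionRing (MvPolynomial (Fin 2) ℚ)

/-- The equivariant parameter `ε₁`. -/
def eps1 : Kf := algebraMap (MvPolynomial (Fin 2) ℚ) Kf (MvPolynomial.X 0)

/-- The equivariant parameter `ε₂`. -/
def eps2 : Kf := algebraMap (MvPolynomial (Fin 2) ℚ) Kf (MvPolynomial.X 1)

/-- The content `[b] = b₁ε₁ + b₂ε₂` of a box `b`. -/
def content (b : ℕ × ℕ) : Kf := (b.1 : Kf) * eps1 + (b.2 : Kf) * eps2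

/-- The set `A_Y` of addable boxes (inner corners) of a Young diagram `Y`. -/
def addables (Y : YoungDiagram) : Finset (ℕ × ℕ) :=
  ((Finset.range (Y.cells.card + 1)) ×ˢ (Finset.range (Y.cells.card + 1))).filter
    (fun c => c ∉ Y.cells ∧ (c.1 = 0 ∨ (c.1 - 1, c.2) ∈ Y.cells) ∧
      (c.2 = 0 ∨ (c.1, c.2 - 1) ∈ Y.cells))

/-- The set `R_Y` of removable boxes of a Young diagram `Y`. -/
def removables (Y : YoungDiagram) : Finset (ℕ × ℕ) :=
  Y.cells.filter fun c => (c.1 + 1, c.2) ∉ Y.cells ∧ (c.1, c.2 + 1) ∉ Y.cells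

/-- The set `R⁺_Y = {t + (1,1) : t ∈ R_Y}` of outer corners of `Y`. -/
def outers (Y : YoungDiagram) : Finset (ℕ × ℕ) :=
  (removables Y).image fun c => (c.1 + 1, c.2 + 1)

/-- Kerov's co-transition measure
`τ_Y^a = ∏_{t∈R⁺_Y}[a-t] / ∏_{a'∈A_Y, a'≠a}[a-a']` at an addable box `a`. -/
def tau (Y : YoungDiagram) (a : ℕ × ℕ) : Kf :=
  (∏ t ∈ outers Y, (content a - content t)) /
    ∏ a' ∈ (addables Y).erase a, (content a - content a')

open scoped RatFunc in
/-- The rational-function field in the spectral variable `u` over `ℂ(ε₁,ε₂)`. -/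
abbrev Fu : Type := RatFunc Kf

/-- `N(u) = (u-[0,0])(u-[1,1]) / ((u-[1,0])(u-[0,1]))`. -/
def Nspec (v : Fu) : Fu :=
  (v * (v - RatFunc.C (eps1 + eps2))) / ((v - RatFunc.C eps1) * (v - RatFunc.C eps2))

-- coordinate bounds
lemma coord_lt (Y : YoungDiagram) {i j : ℕ} (h : (i, j) ∈ Y.cells) :
    i < Y.cells.card ∧ j < Y.cells.card := by
  constructor
  · have : (Finset.range (i+1)).card ≤ Y.cells.card := by
      apply Finset.card_le_card_of_injOn (fun k => (k, j))
      · intro k hk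
        exact Y.up_left_mem (by simpa using Nat.lt_succ_iff.mp (Finset.mem_range.mp hk)) le_rfl h
      · intro a _ b _ hab
        simpa using congrArg Prod.fst hab
    simpa using this
  · have : (Finset.range (j+1)).card ≤ Y.cells.card := by
      apply Finset.card_le_card_of_injOn (fun k => (i, k))
      · intro k hk
        exact Y.up_left_mem le_rfl (Nat.lt_succ_iff.mp (Finset.mem_range.mp hk)) h
      · intro a _ b _ hab
        simpa using congrArg Prod.snd hab
    simpa using this

lemma mem_addables_iff (Y : YoungDiagram) (c : ℕ × ℕ) :
    c ∈ addables Y ↔ c ∉ Y.cells ∧ (c.1 = 0 ∨ (c.1 - 1, c.2) ∈ Y.cells) ∧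
      (c.2 = 0 ∨ (c.1, c.2 - 1) ∈ Y.cells) := by
  unfold addables
  rw [Finset.mem_filter]
  constructor
  · exact fun h => h.2
  · rintro ⟨h1, h2, h3⟩
    refine ⟨Finset.mem_product.mpr ⟨Finset.mem_range.mpr ?_, Finset.mem_range.mpr ?_⟩, h1, h2, h3⟩
    · rcases h2 with h | h
      · omega
      · have := (coord_lt Y h).1; omega
    · rcases h3 with h | h
      · omega
      · have := (coord_lt Y h).2; omega

lemma mem_outers_iff (Y : YoungDiagram) (c1 c2 : ℕ) :
    (c1 + 1, c2 + 1) ∈ outers Y ↔ (c1, c2) ∈ removables Y := by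
  unfold outers
  simp only [Finset.mem_image]
  constructor
  · rintro ⟨t, ht, h⟩
    obtain ⟨h1, h2⟩ : t.1 = c1 ∧ t.2 = c2 := by
      constructor <;> [have := congrArg Prod.fst h; have := congrArg Prod.snd h] <;> simp_all
    rwa [← h1, ← h2, Prod.mk.eta]
  · exact fun h => ⟨(c1, c2), h, rfl⟩

lemma cnt {α : Type*} [DecidableEq α] (s : Finset α) (a : α) :
    s.val.count a = if a ∈ s then 1 else 0 := by
  split_ifs with h
  · exact Multiset.count_eq_one_of_mem s.nodup h
  · exact Multiset.count_eq_zero_of_notMem h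

lemma ind_main (a b p q : Prop) [Decidable a] [Decidable b] [Decidable p] [Decidable q]
    (hap : a → p) (haq : a → q) (hpb : p → b) (hqb : q → b) :
    (if a then 1 else 0) + (if b then 1 else 0) + (if ¬a ∧ p ∧ q then 1 else 0)
      = (if b ∧ ¬q ∧ ¬p then 1 else 0) + (if p then 1 else 0) + (if q then 1 else 0) := by
  by_cases ha : a <;> by_cases hb : b <;> by_cases hp : p <;> by_cases hq : q <;> simp_all

lemma ind_side (a q : Prop) [Decidable a] [Decidable q] (haq : a → q) :
    (if a then 1 else 0) + (if ¬a ∧ q then 1 else 0) = (if q then 1 else 0) := by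
  by_cases ha : a <;> by_cases hq : q <;> simp_all

lemma key (Y : YoungDiagram) :
    Y.cells.val + Y.cells.val.map (fun s => (s.1 + 1, s.2 + 1)) + (addables Y).val
      = (((0, 0) : ℕ × ℕ) ::ₘ (outers Y).val) + Y.cells.val.map (fun s => (s.1 + 1, s.2))
        + Y.cells.val.map (fun s => (s.1, s.2 + 1)) := by
  refine Multiset.ext.mpr fun c => ?_
  obtain ⟨c1, c2⟩ := c
  simp only [Multiset.count_add, Multiset.count_cons]
  have inj11 : Function.Injective (fun s : ℕ × ℕ => (s.1 + 1, s.2 + 1)) := by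
    intro a b h; have h1 := congrArg Prod.fst h; have h2 := congrArg Prod.snd h
    simp at h1 h2; exact Prod.ext h1 h2
  have inj10 : Function.Injective (fun s : ℕ × ℕ => (s.1 + 1, s.2)) := by
    intro a b h; have h1 := congrArg Prod.fst h; have h2 := congrArg Prod.snd h
    simp at h1 h2; exact Prod.ext h1 h2
  have inj01 : Function.Injective (fun s : ℕ × ℕ => (s.1, s.2 + 1)) := by
    intro a b h; have h1 := congrArg Prod.fst h; have h2 := congrArg Prod.snd h
    simp at h1 h2; exact Prod.ext h1 h2
  match c1, c2 with
  | 0, 0 =>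
    have h11 : ((0,0) : ℕ×ℕ) ∉ Y.cells.val.map (fun s => (s.1 + 1, s.2 + 1)) := by
      simp
    have h10 : ((0,0) : ℕ×ℕ) ∉ Y.cells.val.map (fun s => (s.1 + 1, s.2)) := by simp
    have h01 : ((0,0) : ℕ×ℕ) ∉ Y.cells.val.map (fun s => (s.1, s.2 + 1)) := by simp
    have hout : ((0,0) : ℕ×ℕ) ∉ outers Y := by
      unfold outers; simp
    rw [Multiset.count_eq_zero_of_notMem h11, Multiset.count_eq_zero_of_notMem h10,
      Multiset.count_eq_zero_of_notMem h01, cnt, cnt, cnt]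
    have hA : (((0,0) : ℕ×ℕ) ∈ addables Y) ↔ (((0,0):ℕ×ℕ) ∉ Y.cells) := by
      rw [mem_addables_iff]; simp
    by_cases h : ((0,0) : ℕ×ℕ) ∈ Y.cells <;> simp_all
  | 0, c2 + 1 =>
    have h11 : ((0, c2+1) : ℕ×ℕ) ∉ Y.cells.val.map (fun s => (s.1 + 1, s.2 + 1)) := by simp
    have h10 : ((0, c2+1) : ℕ×ℕ) ∉ Y.cells.val.map (fun s => (s.1 + 1, s.2)) := by simp
    have hout : ((0, c2+1) : ℕ×ℕ) ∉ outers Y := by unfold outers; simp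
    have h01 : Multiset.count ((0, c2+1) : ℕ×ℕ) (Y.cells.val.map (fun s => (s.1, s.2 + 1)))
        = Y.cells.val.count (0, c2) :=
      (Multiset.count_map_eq_count' _ Y.cells.val inj01 (0, c2) : _)
    rw [Multiset.count_eq_zero_of_notMem h11, Multiset.count_eq_zero_of_notMem h10, h01,
      cnt, cnt, cnt, cnt]
    have hA : (((0, c2+1) : ℕ×ℕ) ∈ addables Y) ↔
        (((0, c2+1) : ℕ×ℕ) ∉ Y.cells ∧ ((0, c2) : ℕ×ℕ) ∈ Y.cells) := by
      rw [mem_addables_iff]; simp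
    have hup : ((0, c2+1) : ℕ×ℕ) ∈ Y.cells → ((0, c2) : ℕ×ℕ) ∈ Y.cells :=
      fun h => Y.up_left_mem le_rfl (by omega) h
    by_cases ha : ((0, c2+1) : ℕ×ℕ) ∈ Y.cells <;>
      by_cases hq : ((0, c2) : ℕ×ℕ) ∈ Y.cells <;> simp_all
  | c1 + 1, 0 =>
    have h11 : ((c1+1, 0) : ℕ×ℕ) ∉ Y.cells.val.map (fun s => (s.1 + 1, s.2 + 1)) := by simp
    have h01 : ((c1+1, 0) : ℕ×ℕ) ∉ Y.cells.val.map (fun s => (s.1, s.2 + 1)) := by simp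
    have hout : ((c1+1, 0) : ℕ×ℕ) ∉ outers Y := by unfold outers; simp
    have h10 : Multiset.count ((c1+1, 0) : ℕ×ℕ) (Y.cells.val.map (fun s => (s.1 + 1, s.2)))
        = Y.cells.val.count (c1, 0) :=
      (Multiset.count_map_eq_count' _ Y.cells.val inj10 (c1, 0) : _)
    rw [Multiset.count_eq_zero_of_notMem h11, Multiset.count_eq_zero_of_notMem h01, h10,
      cnt, cnt, cnt, cnt]
    have hA : (((c1+1, 0) : ℕ×ℕ) ∈ addables Y) ↔
        (((c1+1, 0) : ℕ×ℕ) ∉ Y.cells ∧ ((c1, 0) : ℕ×ℕ) ∈ Y.cells) := by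
      rw [mem_addables_iff]; simp
    have hup : ((c1+1, 0) : ℕ×ℕ) ∈ Y.cells → ((c1, 0) : ℕ×ℕ) ∈ Y.cells :=
      fun h => Y.up_left_mem (by omega) le_rfl h
    by_cases ha : ((c1+1, 0) : ℕ×ℕ) ∈ Y.cells <;>
      by_cases hq : ((c1, 0) : ℕ×ℕ) ∈ Y.cells <;> simp_all
  | c1 + 1, c2 + 1 =>
    have h11 : Multiset.count ((c1+1, c2+1) : ℕ×ℕ) (Y.cells.val.map (fun s => (s.1 + 1, s.2 + 1)))
        = Y.cells.val.count (c1, c2) :=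
      (Multiset.count_map_eq_count' _ Y.cells.val inj11 (c1, c2) : _)
    have h10 : Multiset.count ((c1+1, c2+1) : ℕ×ℕ) (Y.cells.val.map (fun s => (s.1 + 1, s.2)))
        = Y.cells.val.count (c1, c2+1) :=
      (Multiset.count_map_eq_count' _ Y.cells.val inj10 (c1, c2+1) : _)
    have h01 : Multiset.count ((c1+1, c2+1) : ℕ×ℕ) (Y.cells.val.map (fun s => (s.1, s.2 + 1)))
        = Y.cells.val.count (c1+1, c2) :=
      (Multiset.count_map_eq_count' _ Y.cells.val inj01 (c1+1, c2) : _)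
    rw [h11, h10, h01, cnt, cnt, cnt, cnt, cnt, cnt]
    have hA : (((c1+1, c2+1) : ℕ×ℕ) ∈ addables Y) ↔
        (((c1+1, c2+1) : ℕ×ℕ) ∉ Y.cells ∧ ((c1, c2+1) : ℕ×ℕ) ∈ Y.cells ∧
          ((c1+1, c2) : ℕ×ℕ) ∈ Y.cells) := by
      rw [mem_addables_iff]; simp
    have hO : (((c1+1, c2+1) : ℕ×ℕ) ∈ outers Y) ↔
        (((c1, c2) : ℕ×ℕ) ∈ Y.cells ∧ ((c1+1, c2) : ℕ×ℕ) ∉ Y.cells ∧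
          ((c1, c2+1) : ℕ×ℕ) ∉ Y.cells) := by
      rw [mem_outers_iff]; unfold removables; rw [Finset.mem_filter]
    have hap : ((c1+1, c2+1) : ℕ×ℕ) ∈ Y.cells → ((c1, c2+1) : ℕ×ℕ) ∈ Y.cells :=
      fun h => Y.up_left_mem (by omega) le_rfl h
    have haq : ((c1+1, c2+1) : ℕ×ℕ) ∈ Y.cells → ((c1+1, c2) : ℕ×ℕ) ∈ Y.cells :=
      fun h => Y.up_left_mem le_rfl (by omega) h
    have hpb : ((c1, c2+1) : ℕ×ℕ) ∈ Y.cells → ((c1, c2) : ℕ×ℕ) ∈ Y.cells :=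
      fun h => Y.up_left_mem le_rfl (by omega) h
    have hqb : ((c1+1, c2) : ℕ×ℕ) ∈ Y.cells → ((c1, c2) : ℕ×ℕ) ∈ Y.cells :=
      fun h => Y.up_left_mem (by omega) le_rfl h
    by_cases ha : ((c1+1, c2+1) : ℕ×ℕ) ∈ Y.cells <;>
      by_cases hb : ((c1, c2) : ℕ×ℕ) ∈ Y.cells <;>
      by_cases hp : ((c1, c2+1) : ℕ×ℕ) ∈ Y.cells <;>
      by_cases hq : ((c1+1, c2) : ℕ×ℕ) ∈ Y.cells <;> simp_all


lemma XC_ne (k : Kf) : (RatFunc.X - RatFunc.C k : RatFunc Kf) ≠ 0 := by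
  rw [← RatFunc.algebraMap_X, ← RatFunc.algebraMap_C, ← map_sub]
  exact RatFunc.algebraMap_ne_zero (Polynomial.X_sub_C_ne_zero k)

lemma content_shift11 (s : ℕ × ℕ) : content (s.1 + 1, s.2 + 1) = content s + (eps1 + eps2) := by
  simp only [content]; push_cast; ring

lemma content_shift10 (s : ℕ × ℕ) : content (s.1 + 1, s.2) = content s + eps1 := by
  simp only [content]; push_cast; ring

lemma content_shift01 (s : ℕ × ℕ) : content (s.1, s.2 + 1) = content s + eps2 := by
  simp only [content]; push_cast; ring

lemma Nspec_eq (s : ℕ × ℕ) :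
    Nspec (RatFunc.X - RatFunc.C (content s)) =
      ((RatFunc.X - RatFunc.C (content s)) *
        (RatFunc.X - RatFunc.C (content (s.1 + 1, s.2 + 1)))) /
      ((RatFunc.X - RatFunc.C (content (s.1 + 1, s.2))) *
        (RatFunc.X - RatFunc.C (content (s.1, s.2 + 1)))) := by
  rw [Nspec, content_shift11, content_shift10, content_shift01]
  simp only [RingHom.map_add]
  ring

lemma content00 : content (0, 0) = 0 := by simp [content]

/-- for any partition (Young diagram) `λ`, the spectral function
`T_λ(u) = ∏_{s∈λ} N(u-[s])` telescopes along the profile: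
`T_λ(u) = u · ∏_{t∈R⁺_λ}(u-[t]) / ∏_{s∈A_λ}(u-[s])`. -/
theorem T_eq_corner_form (Y : YoungDiagram) :
    ∏ s ∈ Y.cells, Nspec (RatFunc.X - RatFunc.C (content s)) =
      RatFunc.X * (∏ t ∈ outers Y, (RatFunc.X - RatFunc.C (content t))) /
        ∏ s ∈ addables Y, (RatFunc.X - RatFunc.C (content s)) := by

  set f : ℕ × ℕ → RatFunc Kf := fun c => RatFunc.X - RatFunc.C (content c) with hf
  have hfne : ∀ c : ℕ × ℕ, f c ≠ 0 := fun c => XC_ne _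
  have hprod : (∏ s ∈ Y.cells, f s) * (∏ s ∈ Y.cells, f (s.1 + 1, s.2 + 1)) *
      (∏ a ∈ addables Y, f a)
      = RatFunc.X * (∏ t ∈ outers Y, f t) *
        ((∏ s ∈ Y.cells, f (s.1 + 1, s.2)) * (∏ s ∈ Y.cells, f (s.1, s.2 + 1))) := by
    have h := congrArg (fun m : Multiset (ℕ × ℕ) => (m.map f).prod) (key Y)
    simp only [Multiset.map_add, Multiset.prod_add, Multiset.map_cons, Multiset.prod_cons,
      Multiset.map_map, Function.comp] at h
    have h00 : f (0, 0) = RatFunc.X := by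
      show RatFunc.X - RatFunc.C (content (0, 0)) = RatFunc.X
      rw [content00, RingHom.map_zero, sub_zero]
    rw [h00] at h
    simp only [Finset.prod_eq_multiset_prod]
    calc _ = (Multiset.map f Y.cells.val).prod *
          (Multiset.map (fun s => f (s.1 + 1, s.2 + 1)) Y.cells.val).prod *
          (Multiset.map f (addables Y).val).prod := rfl
      _ = _ := by rw [h]; ring
  have hLHS : ∀ s ∈ Y.cells, Nspec (RatFunc.X - RatFunc.C (content s)) =
      (f s * f (s.1 + 1, s.2 + 1)) / (f (s.1 + 1, s.2) * f (s.1, s.2 + 1)) :=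
    fun s _ => Nspec_eq s
  rw [Finset.prod_congr rfl hLHS, Finset.prod_div_distrib, Finset.prod_mul_distrib,
    Finset.prod_mul_distrib]
  rw [div_eq_div_iff
    (mul_ne_zero (Finset.prod_ne_zero_iff.mpr fun s _ => hfne _)
      (Finset.prod_ne_zero_iff.mpr fun s _ => hfne _))
    (Finset.prod_ne_zero_iff.mpr fun s _ => hfne _)]
  linear_combination hprod

end
end

section
/- Norm ratio of Jack polynomials via transition measures: for any partition λ and addable box s ∈ A_λ, ‖j_{λ+s}‖² / ‖j_λ‖² = τ̃_{λ+s}^{s+(1,1)} / τ_λ^s, where the norms are Stanley's norms ‖j_μ‖² = ∏_{b∈μ} h^U_μ(b)·h^L_μ(b) (products of upper and lower hook lengths in contents), τ_λ^s is Kerov's co-transition measure at s, and τ̃_{λ+s}^{s+(1,1)} is the transition measure of λ+s at the outer corner s+(1,1). -/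
noncomputable section

/-- Kerov's transition measure `τ̃_Y^t` at an outer corner `t ∈ R⁺_Y`, in the paper's
sign convention: up to sign it is `∏_{a∈A_Y}[t-a] / ∏_{t'∈R⁺_Y, t'≠t}[t-t']`. -/
def ttau (Y : YoungDiagram) (t : ℕ × ℕ) : Kf :=
  -(∏ a ∈ addables Y, (content t - content a)) /
    ∏ t' ∈ (outers Y).erase t, (content t - content t')

/-- The arm length `a(b)` of a box `b` of `Y` (number of boxes of `Y` strictly beyond
`b` in its row, the row direction being the `ε₁`-direction, i.e. the first
coordinate). -/
def armLen (Y : YoungDiagram) (b : ℕ × ℕ) : ℕ := Y.colLen b.2 - b.1 - 1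

/-- The leg length `l(b)` of a box `b` of `Y` (number of boxes strictly beyond `b`
in the perpendicular, `ε₂`, direction). -/
def legLen (Y : YoungDiagram) (b : ℕ × ℕ) : ℕ := Y.rowLen b.1 - b.2 - 1

/-- The upper hook `h^U_Y(b) = ε₁ a(b) - ε₂ (l(b)+1)`. -/
def hookU (Y : YoungDiagram) (b : ℕ × ℕ) : Kf :=
  (armLen Y b : Kf) * eps1 - ((legLen Y b : Kf) + 1) * eps2

/-- The lower hook `h^L_Y(b) = ε₁ (a(b)+1) - ε₂ l(b)`. -/
def hookL (Y : YoungDiagram) (b : ℕ × ℕ) : Kf :=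
  ((armLen Y b : Kf) + 1) * eps1 - (legLen Y b : Kf) * eps2

/-- Stanley's norm `‖j_Y‖² = ∏_{b∈Y} h^U_Y(b)·h^L_Y(b)`. -/
def jackNormSq (Y : YoungDiagram) : Kf := ∏ b ∈ Y.cells, hookU Y b * hookL Y b

open Finset

namespace JackAux

/-- `f_s(x) = ([s]-[x])([s+(1,1)]-[x])`. -/
def ff (s : ℕ × ℕ) (x : ℕ × ℕ) : Kf :=
  (content s - content x) * (content (s.1 + 1, s.2 + 1) - content x)

/-- `g_s(x) = [s+(1,1)]-[x]`. -/
def gg (s : ℕ × ℕ) (x : ℕ × ℕ) : Kf := content (s.1 + 1, s.2 + 1) - content x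

lemma prod_ff (s : ℕ × ℕ) (S : Finset (ℕ × ℕ)) :
    ∏ x ∈ S, ff s x = (∏ x ∈ S, (content s - content x)) * ∏ x ∈ S, gg s x := by
  unfold ff gg; rw [Finset.prod_mul_distrib]

lemma eps_ne (m n : ℤ) (h : m ≠ 0 ∨ n ≠ 0) : (m : Kf) * eps1 + (n : Kf) * eps2 ≠ 0 := by
  have hinj := IsFractionRing.injective (MvPolynomial (Fin 2) ℚ) Kf
  set p : MvPolynomial (Fin 2) ℚ := (m : MvPolynomial (Fin 2) ℚ) * MvPolynomial.X 0
    + (n : MvPolynomial (Fin 2) ℚ) * MvPolynomial.X 1 with hp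
  have hrepr : (m : Kf) * eps1 + (n : Kf) * eps2 = algebraMap (MvPolynomial (Fin 2) ℚ) Kf p := by
    simp [hp, eps1, eps2, map_add, map_mul]
  rw [hrepr]
  intro hzero
  have hp0 : p = 0 := by
    have := hinj (a₁ := p) (a₂ := 0) (by simpa using hzero)
    simpa using this
  rcases h with hm | hn
  · have := congrArg (MvPolynomial.eval (fun k : Fin 2 => if k = 0 then (1:ℚ) else 0)) hp0
    simp [hp] at this
    exact hm (by exact_mod_cast this)
  · have := congrArg (MvPolynomial.eval (fun k : Fin 2 => if k = 1 then (1:ℚ) else 0)) hp0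
    simp [hp] at this
    exact hn (by exact_mod_cast this)

lemma content_sub_ne {x y : ℕ × ℕ} (h : x ≠ y) : content x - content y ≠ 0 := by
  have hrepr : content x - content y
      = ((x.1 : ℤ) - (y.1 : ℤ) : ℤ) * eps1 + ((x.2 : ℤ) - (y.2 : ℤ) : ℤ) * eps2 := by
    simp [content]; ring
  rw [hrepr]
  apply eps_ne
  by_contra hc
  push_neg at hc
  exact h (Prod.ext (by omega) (by omega))

lemma hookU_ne (Z : YoungDiagram) (b : ℕ × ℕ) : hookU Z b ≠ 0 := by
  have h := eps_ne (armLen Z b) (-(legLen Z b + 1)) (Or.inr (by omega))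
  intro hzero
  apply h
  rw [show ((armLen Z b : ℤ) : Kf) * eps1 + ((-(legLen Z b + 1) : ℤ) : Kf) * eps2
      = hookU Z b by unfold hookU; push_cast; ring, hzero]

lemma hookL_ne (Z : YoungDiagram) (b : ℕ × ℕ) : hookL Z b ≠ 0 := by
  have h := eps_ne ((armLen Z b : ℤ) + 1) (-(legLen Z b)) (Or.inl (by omega))
  intro hzero
  apply h
  rw [show (((armLen Z b : ℤ) + 1 : ℤ) : Kf) * eps1 + ((-(legLen Z b : ℤ) : ℤ) : Kf) * eps2
      = hookL Z b by unfold hookL; push_cast; ring, hzero]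

lemma rowLen_le_card (Y : YoungDiagram) (i : ℕ) : Y.rowLen i ≤ Y.cells.card := by
  rw [Y.rowLen_eq_card]
  exact Finset.card_le_card (Finset.filter_subset _ _)

lemma colLen_le_card (Y : YoungDiagram) (j : ℕ) : Y.colLen j ≤ Y.cells.card := by
  rw [Y.colLen_eq_card]
  exact Finset.card_le_card (Finset.filter_subset _ _)

lemma mem_addables_row {Y : YoungDiagram} {x : ℕ × ℕ} :
    x ∈ addables Y ↔ x.2 = Y.rowLen x.1 ∧ (x.1 = 0 ∨ Y.rowLen x.1 < Y.rowLen (x.1 - 1)) := by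
  obtain ⟨i, j⟩ := x
  simp only [addables, Finset.mem_filter, Finset.mem_product, Finset.mem_range,
    ← YoungDiagram.mem_cells]
  simp only [YoungDiagram.mem_cells, YoungDiagram.mem_iff_lt_rowLen]
  constructor
  · rintro ⟨⟨hi, hj⟩, hnot, hup, hleft⟩
    have hr : j = Y.rowLen i := by
      rcases hleft with h0 | hlt
      · omega
      · omega
    refine ⟨hr, ?_⟩
    rcases hup with h0 | hlt
    · exact Or.inl h0
    · exact Or.inr (by omega)
  · rintro ⟨hr, hup⟩
    have hjle : j ≤ Y.cells.card := hr ▸ rowLen_le_card Y i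
    have hile : i ≤ Y.cells.card := by
      rcases hup with h0 | hlt
      · omega
      · have h1 : 0 < Y.rowLen (i - 1) := by omega
        have : (i - 1, 0) ∈ Y := YoungDiagram.mem_iff_lt_rowLen.2 h1
        have := YoungDiagram.mem_iff_lt_colLen.1 this
        have := colLen_le_card Y 0
        omega
    refine ⟨⟨by omega, by omega⟩, by omega, ?_, ?_⟩
    · rcases hup with h0 | hlt
      · exact Or.inl h0
      · exact Or.inr (by omega)
    · rcases Nat.eq_zero_or_pos j with h0 | hpos
      · exact Or.inl h0
      · exact Or.inr (by omega)

lemma mem_addables_col {Y : YoungDiagram} {x : ℕ × ℕ} :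
    x ∈ addables Y ↔ x.1 = Y.colLen x.2 ∧ (x.2 = 0 ∨ Y.colLen x.2 < Y.colLen (x.2 - 1)) := by
  obtain ⟨i, j⟩ := x
  simp only [addables, Finset.mem_filter, Finset.mem_product, Finset.mem_range,
    ← YoungDiagram.mem_cells]
  simp only [YoungDiagram.mem_cells, YoungDiagram.mem_iff_lt_colLen]
  constructor
  · rintro ⟨⟨hi, hj⟩, hnot, hup, hleft⟩
    have hr : i = Y.colLen j := by
      rcases hup with h0 | hlt
      · omega
      · omega
    refine ⟨hr, ?_⟩
    rcases hleft with h0 | hlt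
    · exact Or.inl h0
    · exact Or.inr (by omega)
  · rintro ⟨hr, hleft⟩
    have hile : i ≤ Y.cells.card := hr ▸ colLen_le_card Y j
    have hjle : j ≤ Y.cells.card := by
      rcases hleft with h0 | hlt
      · omega
      · have h1 : 0 < Y.colLen (j - 1) := by omega
        have : (0, j - 1) ∈ Y := YoungDiagram.mem_iff_lt_colLen.2 h1
        have := YoungDiagram.mem_iff_lt_rowLen.1 this
        have := rowLen_le_card Y 0
        omega
    refine ⟨⟨by omega, by omega⟩, by omega, ?_, ?_⟩
    · rcases Nat.eq_zero_or_pos i with h0 | hpos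
      · exact Or.inl h0
      · exact Or.inr (by omega)
    · rcases hleft with h0 | hlt
      · exact Or.inl h0
      · exact Or.inr (by omega)

lemma mem_outers_row {Y : YoungDiagram} {x : ℕ × ℕ} :
    x ∈ outers Y ↔ 1 ≤ x.1 ∧ x.2 = Y.rowLen (x.1 - 1) ∧ Y.rowLen x.1 < Y.rowLen (x.1 - 1) := by
  obtain ⟨i, j⟩ := x
  simp only [outers, removables, Finset.mem_image, Finset.mem_filter,
    ← YoungDiagram.mem_cells, Prod.ext_iff]
  constructor
  · rintro ⟨⟨a, b⟩, ⟨hab, h1, h2⟩, hi, hj⟩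
    simp only at hi hj
    rw [YoungDiagram.mem_cells, YoungDiagram.mem_iff_lt_rowLen] at hab h1 h2
    dsimp only at hab h1 h2
    subst hi; subst hj
    simp only [Nat.add_sub_cancel]
    omega
  · rintro ⟨hi, hj, hlt⟩
    refine ⟨(i - 1, j - 1), ⟨?_, ?_, ?_⟩, by omega, by omega⟩
    · rw [YoungDiagram.mem_cells, YoungDiagram.mem_iff_lt_rowLen]
      have : 0 < Y.rowLen (i-1) := by omega
      omega
    · rw [YoungDiagram.mem_cells, YoungDiagram.mem_iff_lt_rowLen]
      simp only
      have h0 : 0 < j := by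
        have := Y.rowLen_anti (i-1) i (by omega)
        omega
      have : i - 1 + 1 = i := by omega
      rw [this]
      omega
    · rw [YoungDiagram.mem_cells, YoungDiagram.mem_iff_lt_rowLen]
      simp only
      have h0 : 0 < j := by
        have := Y.rowLen_anti (i-1) i (by omega)
        omega
      have : j - 1 + 1 = j := by omega
      rw [this]
      omega

lemma mem_outers_col {Y : YoungDiagram} {x : ℕ × ℕ} :
    x ∈ outers Y ↔ 1 ≤ x.2 ∧ x.1 = Y.colLen (x.2 - 1) ∧ Y.colLen x.2 < Y.colLen (x.2 - 1) := by
  obtain ⟨i, j⟩ := x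
  simp only [outers, removables, Finset.mem_image, Finset.mem_filter,
    ← YoungDiagram.mem_cells, Prod.ext_iff]
  constructor
  · rintro ⟨⟨a, b⟩, ⟨hab, h1, h2⟩, hi, hj⟩
    simp only at hi hj
    rw [YoungDiagram.mem_cells, YoungDiagram.mem_iff_lt_colLen] at hab h1 h2
    dsimp only at hab h1 h2
    subst hi; subst hj
    simp only [Nat.add_sub_cancel]
    omega
  · rintro ⟨hj, hi, hlt⟩
    refine ⟨(i - 1, j - 1), ⟨?_, ?_, ?_⟩, by omega, by omega⟩
    · rw [YoungDiagram.mem_cells, YoungDiagram.mem_iff_lt_colLen]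
      have h0 : 0 < i := by
        have := Y.colLen_anti (j-1) j (by omega)
        omega
      omega
    · rw [YoungDiagram.mem_cells, YoungDiagram.mem_iff_lt_colLen]
      simp only
      have h0 : 0 < i := by
        have := Y.colLen_anti (j-1) j (by omega)
        omega
      have : i - 1 + 1 = i := by omega
      rw [this]
      omega
    · rw [YoungDiagram.mem_cells, YoungDiagram.mem_iff_lt_colLen]
      simp only
      have h0 : 0 < i := by
        have := Y.colLen_anti (j-1) j (by omega)
        omega
      have : j - 1 + 1 = j := by omega
      rw [this]
      omega

lemma addable_row_le {Z : YoungDiagram} {x : ℕ × ℕ} (h : x ∈ addables Z) :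
    x.1 ≤ Z.colLen 0 := by
  obtain ⟨h1, h2⟩ := mem_addables_row.1 h
  rcases h2 with h0 | hlt
  · omega
  · have hm : (x.1 - 1, 0) ∈ Z := YoungDiagram.mem_iff_lt_rowLen.2 (by omega)
    have := YoungDiagram.mem_iff_lt_colLen.1 hm
    omega

lemma outer_row_le {Z : YoungDiagram} {x : ℕ × ℕ} (h : x ∈ outers Z) :
    x.1 ≤ Z.colLen 0 := by
  obtain ⟨h1, h2, h3⟩ := mem_outers_row.1 h
  have hm : (x.1 - 1, 0) ∈ Z := YoungDiagram.mem_iff_lt_rowLen.2 (by omega)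
  have := YoungDiagram.mem_iff_lt_colLen.1 hm
  omega

lemma rowLen_eq_of_iff {Z : YoungDiagram} {k n : ℕ} (h : ∀ m, (k, m) ∈ Z ↔ m < n) :
    Z.rowLen k = n := by
  have ha : ∀ m, m < Z.rowLen k ↔ m < n := fun m =>
    YoungDiagram.mem_iff_lt_rowLen.symm.trans (h m)
  have hb := (ha n).1
  have hc := (ha (Z.rowLen k)).2
  omega

lemma colLen_eq_of_iff {Z : YoungDiagram} {k n : ℕ} (h : ∀ m, (m, k) ∈ Z ↔ m < n) :
    Z.colLen k = n := by
  have ha : ∀ m, m < Z.colLen k ↔ m < n := fun m =>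
    YoungDiagram.mem_iff_lt_colLen.symm.trans (h m)
  have hb := (ha n).1
  have hc := (ha (Z.colLen k)).2
  omega

lemma prod_coords (g : ℕ × ℕ → Kf) (S : Finset (ℕ × ℕ)) (P : ℕ → Prop) [DecidablePred P]
    (φ : ℕ → ℕ) (M : ℕ) (h : ∀ x : ℕ × ℕ, x ∈ S ↔ x.1 < M ∧ P x.1 ∧ x.2 = φ x.1) :
    ∏ x ∈ S, g x = ∏ k ∈ Finset.range M, if P k then g (k, φ k) else 1 := by
  have hS : S = Finset.image (fun k => (k, φ k)) ((Finset.range M).filter P) := by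
    ext x
    simp only [Finset.mem_image, Finset.mem_filter, Finset.mem_range, h x]
    constructor
    · rintro ⟨h1, h2, h3⟩
      exact ⟨x.1, ⟨h1, h2⟩, by rw [← h3]⟩
    · rintro ⟨k, ⟨h1, h2⟩, rfl⟩
      exact ⟨h1, h2, rfl⟩
  rw [hS, Finset.prod_image (by intro a _ b _ hab; simpa using congrArg Prod.fst hab),
    Finset.prod_filter]

lemma prod_coords' (g : ℕ × ℕ → Kf) (S : Finset (ℕ × ℕ)) (P : ℕ → Prop) [DecidablePred P]
    (φ : ℕ → ℕ) (M : ℕ) (h : ∀ x : ℕ × ℕ, x ∈ S ↔ x.2 < M ∧ P x.2 ∧ x.1 = φ x.2) :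
    ∏ x ∈ S, g x = ∏ k ∈ Finset.range M, if P k then g (φ k, k) else 1 := by
  have hS : S = Finset.image (fun k => (φ k, k)) ((Finset.range M).filter P) := by
    ext x
    simp only [Finset.mem_image, Finset.mem_filter, Finset.mem_range, h x]
    constructor
    · rintro ⟨h1, h2, h3⟩
      exact ⟨x.2, ⟨h1, h2⟩, by rw [← h3]⟩
    · rintro ⟨k, ⟨h1, h2⟩, rfl⟩
      exact ⟨h1, h2, rfl⟩
  rw [hS, Finset.prod_image (by intro a _ b _ hab; simpa using congrArg Prod.snd hab),
    Finset.prod_filter]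

lemma tele (F : ℕ × ℕ → Kf) (ρ : ℕ → ℕ) (hρ : ∀ k, ρ (k + 1) ≤ ρ k) : ∀ n : ℕ,
    (∏ k ∈ range n, F (k, ρ k)) * (∏ k ∈ range n, if ρ (k + 1) < ρ k then F (k + 1, ρ k) else 1)
      * (if n = 0 ∨ ρ n < ρ (n - 1) then 1 else F (n, ρ n))
    = (∏ k ∈ range n, F (k + 1, ρ k)) *
        (∏ k ∈ range n, if k = 0 ∨ ρ k < ρ (k - 1) then F (k, ρ k) else 1) := by
  intro n
  induction n with
  | zero => simp
  | succ n ih =>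
    rw [prod_range_succ, prod_range_succ, prod_range_succ, prod_range_succ]
    simp only [Nat.add_sub_cancel]
    by_cases hP : n = 0 ∨ ρ n < ρ (n - 1)
    · rw [if_pos hP] at ih
      rw [if_pos hP]
      by_cases hQ : ρ (n + 1) < ρ n
      · rw [if_pos hQ, if_pos (Or.inr hQ : n + 1 = 0 ∨ ρ (n + 1) < ρ n)]
        linear_combination (F (n, ρ n) * F (n + 1, ρ n)) * ih
      · have he : ρ (n + 1) = ρ n := le_antisymm (hρ n) (by omega)
        rw [if_neg hQ, if_neg (by omega : ¬(n + 1 = 0 ∨ ρ (n + 1) < ρ n)), he]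
        linear_combination (F (n, ρ n) * F (n + 1, ρ n)) * ih
    · rw [if_neg hP] at ih
      rw [if_neg hP]
      by_cases hQ : ρ (n + 1) < ρ n
      · rw [if_pos hQ, if_pos (Or.inr hQ : n + 1 = 0 ∨ ρ (n + 1) < ρ n)]
        linear_combination (F (n + 1, ρ n)) * ih
      · have he : ρ (n + 1) = ρ n := le_antisymm (hρ n) (by omega)
        rw [if_neg hQ, if_neg (by omega : ¬(n + 1 = 0 ∨ ρ (n + 1) < ρ n)), he]
        linear_combination (F (n + 1, ρ n)) * ih

lemma pointwise (Y Y' : YoungDiagram) (i j M : ℕ)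
    (hrY' : ∀ k, Y'.rowLen k = if k = i then j + 1 else Y.rowLen k)
    (hri : Y.rowLen i = j)
    (hra : ∀ a b : ℕ, a ≤ b → Y.rowLen b ≤ Y.rowLen a)
    (hup : i = 0 ∨ j < Y.rowLen (i - 1)) (k : ℕ) (hk : k < M) :
    (if k = 0 ∨ Y'.rowLen k < Y'.rowLen (k - 1) then JackAux.gg (i, j) (k, Y'.rowLen k) else 1) *
      (if 1 ≤ k ∧ Y.rowLen k < Y.rowLen (k - 1) then JackAux.gg (i, j) (k, Y.rowLen (k - 1)) else 1)
    = ((if k = i then JackAux.gg (i, j) (i, j + 1) else 1) *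
        (if k = i + 1 then JackAux.gg (i, j) (i + 1, j) else 1)) *
      ((if (k = 0 ∨ Y.rowLen k < Y.rowLen (k - 1)) ∧ ¬k = i then JackAux.gg (i, j) (k, Y.rowLen k) else 1) *
        (if (1 ≤ k ∧ Y'.rowLen k < Y'.rowLen (k - 1)) ∧ ¬k = i + 1 then JackAux.gg (i, j) (k, Y'.rowLen (k - 1)) else 1)) := by
    by_cases hki : k = i
    · subst hki
      by_cases h0 : k = 0
      · subst h0
        have e0 : Y'.rowLen 0 = j + 1 := by rw [hrY' 0, if_pos rfl]
        simp only [Nat.zero_sub]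
        rw [e0]
        have c2 : ¬(1 ≤ 0 ∧ Y.rowLen 0 < Y.rowLen 0) := by omega
        have c5 : ¬(1 ≤ 0 ∧ j + 1 < j + 1) := by omega
        have c4 : ¬((0:ℕ) = 1) := by omega
        simp only [c2, c5, c4, true_or, not_true, and_false, false_and, if_true, if_false,
          eq_self_iff_true, true_and, and_true, or_false, false_or]
        ring
      · have e1 : Y'.rowLen k = j + 1 := by rw [hrY' k, if_pos rfl]
        have e2 : Y'.rowLen (k - 1) = Y.rowLen (k - 1) := by
          rw [hrY' (k - 1), if_neg (by omega)]
        have hupk : j < Y.rowLen (k - 1) := by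
          rcases hup with h | h
          · omega
          · exact h
        rw [e1, e2]
        split_ifs <;>
          first
            | ring1
            | (exfalso; omega)
            | (rw [show Y.rowLen (k - 1) = j + 1 by omega]; ring1)
            | (exfalso; simp_all <;> omega)
    · by_cases hki1 : k = i + 1
      · subst hki1
        simp only [Nat.add_sub_cancel]
        have e1 : Y'.rowLen (i + 1) = Y.rowLen (i + 1) := by
          rw [hrY' (i + 1), if_neg (by omega)]
        have e2 : Y'.rowLen i = j + 1 := by rw [hrY' i, if_pos rfl]
        have hle : Y.rowLen (i + 1) ≤ j := by
          have := hra i (i + 1) (by omega)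
          omega
        rw [e1, e2]
        split_ifs <;>
          first
            | ring1
            | (exfalso; omega)
            | (rw [hri]; ring1)
            | (rw [show Y.rowLen (i + 1) = j by omega]; ring1)
            | (rw [hri, show Y.rowLen (i + 1) = j by omega]; ring1)
            | (exfalso; simp_all <;> omega)
      · have e1 : Y'.rowLen k = Y.rowLen k := by rw [hrY' k, if_neg hki]
        have e2 : Y'.rowLen (k - 1) = Y.rowLen (k - 1) := by
          rw [hrY' (k - 1), if_neg (by omega)]
        rw [e1, e2]
        split_ifs <;> first | ring1 | (exfalso; omega) | (exfalso; simp_all <;> omega)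


end JackAux



/-- for a partition `λ` and an addable box `s ∈ A_λ`,
`‖j_{λ+s}‖² / ‖j_λ‖² = τ̃_{λ+s}^{s+(1,1)} / τ_λ^s`, where `λ+s` is `λ` with the box `s`
inserted, `τ` is Kerov's co-transition measure and `τ̃` the transition measure. -/
theorem jackNormSq_ratio (Y Y' : YoungDiagram) (s : ℕ × ℕ)
    (hs : s ∈ addables Y) (hY' : Y'.cells = insert s Y.cells) :
    jackNormSq Y' / jackNormSq Y = ttau Y' (s.1 + 1, s.2 + 1) / tau Y s := by
  classical
  obtain ⟨i, j⟩ := s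
  dsimp only at hY' ⊢
  -- basic facts about the addable box s = (i,j)
  have hadd := JackAux.mem_addables_row.1 hs
  have haddc := JackAux.mem_addables_col.1 hs
  dsimp only at hadd haddc
  have hri : Y.rowLen i = j := hadd.1.symm
  have hup : i = 0 ∨ j < Y.rowLen (i - 1) := by
    rcases hadd.2 with h | h
    · exact Or.inl h
    · exact Or.inr (by omega)
  have hcj : Y.colLen j = i := haddc.1.symm
  have hleft : j = 0 ∨ i < Y.colLen (j - 1) := by
    rcases haddc.2 with h | h
    · exact Or.inl h
    · exact Or.inr (by omega)
  have hsY : ((i, j) : ℕ × ℕ) ∉ Y := by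
    rw [YoungDiagram.mem_iff_lt_rowLen]; omega
  have hsYc : ((i, j) : ℕ × ℕ) ∉ Y.cells := by rwa [YoungDiagram.mem_cells]
  have hmemY' : ∀ x : ℕ × ℕ, x ∈ Y' ↔ x = (i, j) ∨ x ∈ Y := by
    intro x
    rw [← YoungDiagram.mem_cells, hY', Finset.mem_insert, YoungDiagram.mem_cells]
  have hra : ∀ a b : ℕ, a ≤ b → Y.rowLen b ≤ Y.rowLen a := fun a b h => Y.rowLen_anti a b h
  have hca : ∀ a b : ℕ, a ≤ b → Y.colLen b ≤ Y.colLen a := fun a b h => Y.colLen_anti a b h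
  -- row and column lengths of Y'
  have hrY' : ∀ k, Y'.rowLen k = if k = i then j + 1 else Y.rowLen k := by
    intro k
    by_cases hk : k = i
    · subst hk
      rw [if_pos rfl]
      apply JackAux.rowLen_eq_of_iff
      intro m
      rw [hmemY' (k, m)]
      constructor
      · rintro (h | h)
        · have : m = j := congrArg Prod.snd h
          omega
        · have := YoungDiagram.mem_iff_lt_rowLen.1 h
          omega
      · intro hm
        rcases Nat.lt_succ_iff_lt_or_eq.1 hm with h | h
        · exact Or.inr (YoungDiagram.mem_iff_lt_rowLen.2 (by omega))
        · exact Or.inl (by rw [h])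
    · rw [if_neg hk]
      apply JackAux.rowLen_eq_of_iff
      intro m
      rw [hmemY' (k, m), YoungDiagram.mem_iff_lt_rowLen]
      constructor
      · rintro (h | h)
        · exact absurd (congrArg Prod.fst h) hk
        · exact h
      · exact Or.inr
  have hcY' : ∀ m, Y'.colLen m = if m = j then i + 1 else Y.colLen m := by
    intro m
    by_cases hm : m = j
    · subst hm
      rw [if_pos rfl]
      apply JackAux.colLen_eq_of_iff
      intro k
      rw [hmemY' (k, m)]
      constructor
      · rintro (h | h)
        · have : k = i := congrArg Prod.fst h
          omega
        · have := YoungDiagram.mem_iff_lt_colLen.1 h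
          omega
      · intro hk
        rcases Nat.lt_succ_iff_lt_or_eq.1 hk with h | h
        · exact Or.inr (YoungDiagram.mem_iff_lt_colLen.2 (by omega))
        · exact Or.inl (by rw [h])
    · rw [if_neg hm]
      apply JackAux.colLen_eq_of_iff
      intro k
      rw [hmemY' (k, m), YoungDiagram.mem_iff_lt_colLen]
      constructor
      · rintro (h | h)
        · exact absurd (congrArg Prod.snd h) hm
        · exact h
      · exact Or.inr
  -- hook evaluations
  have hookcol' : ∀ k, k < i →
      hookU Y' (k, j) * hookL Y' (k, j) = JackAux.ff (i, j) (k, Y.rowLen k) := by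
    intro k hk
    have hmem : ((k, j) : ℕ × ℕ) ∈ Y := YoungDiagram.mem_iff_lt_colLen.2 (by omega)
    have hjr : j < Y.rowLen k := YoungDiagram.mem_iff_lt_rowLen.1 hmem
    unfold hookU hookL armLen legLen
    dsimp only
    rw [hcY' j, if_pos rfl, hrY' k, if_neg (by omega)]
    rw [show i + 1 - k - 1 = i - k by omega, Nat.cast_sub (by omega : k ≤ i)]
    rw [show Y.rowLen k - j - 1 = Y.rowLen k - (j + 1) by omega,
      Nat.cast_sub (by omega : j + 1 ≤ Y.rowLen k)]
    unfold JackAux.ff content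
    dsimp only
    push_cast
    ring
  have hookcol : ∀ k, k < i →
      hookU Y (k, j) * hookL Y (k, j) = JackAux.ff (i, j) (k + 1, Y.rowLen k) := by
    intro k hk
    have hmem : ((k, j) : ℕ × ℕ) ∈ Y := YoungDiagram.mem_iff_lt_colLen.2 (by omega)
    have hjr : j < Y.rowLen k := YoungDiagram.mem_iff_lt_rowLen.1 hmem
    unfold hookU hookL armLen legLen
    dsimp only
    rw [hcj]
    rw [show i - k - 1 = i - (k + 1) by omega, Nat.cast_sub (by omega : k + 1 ≤ i)]
    rw [show Y.rowLen k - j - 1 = Y.rowLen k - (j + 1) by omega,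
      Nat.cast_sub (by omega : j + 1 ≤ Y.rowLen k)]
    unfold JackAux.ff content
    dsimp only
    push_cast
    ring
  have hookrow' : ∀ m, m < j →
      hookU Y' (i, m) * hookL Y' (i, m) = JackAux.ff (i, j) (Y.colLen m, m) := by
    intro m hm
    have hmem : ((i, m) : ℕ × ℕ) ∈ Y := YoungDiagram.mem_iff_lt_rowLen.2 (by omega)
    have him : i < Y.colLen m := YoungDiagram.mem_iff_lt_colLen.1 hmem
    unfold hookU hookL armLen legLen
    dsimp only
    rw [hcY' m, if_neg (by omega), hrY' i, if_pos rfl]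
    rw [show j + 1 - m - 1 = j - m by omega, Nat.cast_sub (by omega : m ≤ j)]
    rw [show Y.colLen m - i - 1 = Y.colLen m - (i + 1) by omega,
      Nat.cast_sub (by omega : i + 1 ≤ Y.colLen m)]
    unfold JackAux.ff content
    dsimp only
    push_cast
    ring
  have hookrow : ∀ m, m < j →
      hookU Y (i, m) * hookL Y (i, m) = JackAux.ff (i, j) (Y.colLen m, m + 1) := by
    intro m hm
    have hmem : ((i, m) : ℕ × ℕ) ∈ Y := YoungDiagram.mem_iff_lt_rowLen.2 (by omega)
    have him : i < Y.colLen m := YoungDiagram.mem_iff_lt_colLen.1 hmem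
    unfold hookU hookL armLen legLen
    dsimp only
    rw [hri]
    rw [show j - m - 1 = j - (m + 1) by omega, Nat.cast_sub (by omega : m + 1 ≤ j)]
    rw [show Y.colLen m - i - 1 = Y.colLen m - (i + 1) by omega,
      Nat.cast_sub (by omega : i + 1 ≤ Y.colLen m)]
    unfold JackAux.ff content
    dsimp only
    push_cast
    ring
  have hookrest : ∀ b : ℕ × ℕ, ¬b.1 = i → ¬b.2 = j →
      hookU Y' b * hookL Y' b = hookU Y b * hookL Y b := by
    intro b h1 h2
    unfold hookU hookL armLen legLen
    rw [hcY' b.2, if_neg h2, hrY' b.1, if_neg h1]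
  have hook_s : hookU Y' (i, j) * hookL Y' (i, j) = -(eps1 * eps2) := by
    unfold hookU hookL armLen legLen
    dsimp only
    rw [hcY' j, if_pos rfl, hrY' i, if_pos rfl]
    rw [show i + 1 - i - 1 = 0 by omega, show j + 1 - j - 1 = 0 by omega]
    push_cast
    ring
  -- splitting the cells of Y
  have hsplit : ∀ F : ℕ × ℕ → Kf, ∏ b ∈ Y.cells, F b =
      ((∏ b ∈ Y.cells.filter (fun b => b.2 = j), F b) *
        (∏ b ∈ (Y.cells.filter (fun b => ¬b.2 = j)).filter (fun b => b.1 = i), F b)) *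
        (∏ b ∈ (Y.cells.filter (fun b => ¬b.2 = j)).filter (fun b => ¬b.1 = i), F b) := by
    intro F
    rw [mul_assoc,
      Finset.prod_filter_mul_prod_filter_not (Y.cells.filter fun b => ¬b.2 = j)
        (fun b => b.1 = i) F,
      Finset.prod_filter_mul_prod_filter_not Y.cells (fun b => b.2 = j) F]
  have hcolset : ∀ G : ℕ × ℕ → Kf,
      ∏ b ∈ Y.cells.filter (fun b => b.2 = j), G b = ∏ k ∈ range i, G (k, j) := by
    intro G
    rw [JackAux.prod_coords G _ (fun _ => True) (fun _ => j) i ?_]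
    · simp
    · intro x
      rw [Finset.mem_filter, YoungDiagram.mem_cells]
      constructor
      · rintro ⟨hx, h2⟩
        have hlt := YoungDiagram.mem_iff_lt_colLen.1 hx
        rw [h2] at hlt
        exact ⟨by omega, trivial, h2⟩
      · rintro ⟨h1, -, h2⟩
        exact ⟨YoungDiagram.mem_iff_lt_colLen.2 (by rw [h2, hcj]; exact h1), h2⟩
  have hrowset : ∀ G : ℕ × ℕ → Kf,
      ∏ b ∈ (Y.cells.filter (fun b => ¬b.2 = j)).filter (fun b => b.1 = i), G b
        = ∏ m ∈ range j, G (i, m) := by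
    intro G
    rw [JackAux.prod_coords' G _ (fun _ => True) (fun _ => i) j ?_]
    · simp
    · intro x
      simp only [Finset.mem_filter, YoungDiagram.mem_cells]
      constructor
      · rintro ⟨⟨hx, h2⟩, h3⟩
        have hlt := YoungDiagram.mem_iff_lt_rowLen.1 hx
        rw [h3, hri] at hlt
        exact ⟨by omega, trivial, h3⟩
      · rintro ⟨h1, -, h2⟩
        refine ⟨⟨YoungDiagram.mem_iff_lt_rowLen.2 (by rw [h2, hri]; exact h1), by omega⟩, h2⟩
  have hPc' : ∏ b ∈ Y.cells.filter (fun b => b.2 = j), (hookU Y' b * hookL Y' b)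
      = ∏ k ∈ range i, JackAux.ff (i, j) (k, Y.rowLen k) := by
    rw [hcolset (fun b => hookU Y' b * hookL Y' b)]
    exact Finset.prod_congr rfl (fun k hk => hookcol' k (Finset.mem_range.1 hk))
  have hPc : ∏ b ∈ Y.cells.filter (fun b => b.2 = j), (hookU Y b * hookL Y b)
      = ∏ k ∈ range i, JackAux.ff (i, j) (k + 1, Y.rowLen k) := by
    rw [hcolset (fun b => hookU Y b * hookL Y b)]
    exact Finset.prod_congr rfl (fun k hk => hookcol k (Finset.mem_range.1 hk))
  have hPr' : ∏ b ∈ (Y.cells.filter (fun b => ¬b.2 = j)).filter (fun b => b.1 = i),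
      (hookU Y' b * hookL Y' b) = ∏ m ∈ range j, JackAux.ff (i, j) (Y.colLen m, m) := by
    rw [hrowset (fun b => hookU Y' b * hookL Y' b)]
    exact Finset.prod_congr rfl (fun m hm => hookrow' m (Finset.mem_range.1 hm))
  have hPr : ∏ b ∈ (Y.cells.filter (fun b => ¬b.2 = j)).filter (fun b => b.1 = i),
      (hookU Y b * hookL Y b) = ∏ m ∈ range j, JackAux.ff (i, j) (Y.colLen m, m + 1) := by
    rw [hrowset (fun b => hookU Y b * hookL Y b)]
    exact Finset.prod_congr rfl (fun m hm => hookrow m (Finset.mem_range.1 hm))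
  have hrest : ∏ b ∈ (Y.cells.filter (fun b => ¬b.2 = j)).filter (fun b => ¬b.1 = i),
      (hookU Y' b * hookL Y' b)
      = ∏ b ∈ (Y.cells.filter (fun b => ¬b.2 = j)).filter (fun b => ¬b.1 = i),
        (hookU Y b * hookL Y b) := by
    apply Finset.prod_congr rfl
    intro b hb
    simp only [Finset.mem_filter] at hb
    exact hookrest b hb.2 hb.1.2
  have hN' : jackNormSq Y' = -(eps1 * eps2) *
      (((∏ k ∈ range i, JackAux.ff (i, j) (k, Y.rowLen k)) *
        (∏ m ∈ range j, JackAux.ff (i, j) (Y.colLen m, m))) *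
        (∏ b ∈ (Y.cells.filter (fun b => ¬b.2 = j)).filter (fun b => ¬b.1 = i),
          (hookU Y b * hookL Y b))) := by
    unfold jackNormSq
    rw [hY', Finset.prod_insert hsYc,
      hsplit (fun b => hookU Y' b * hookL Y' b), hPc', hPr', hrest, hook_s]
  have hN : jackNormSq Y =
      ((∏ k ∈ range i, JackAux.ff (i, j) (k + 1, Y.rowLen k)) *
        (∏ m ∈ range j, JackAux.ff (i, j) (Y.colLen m, m + 1))) *
        (∏ b ∈ (Y.cells.filter (fun b => ¬b.2 = j)).filter (fun b => ¬b.1 = i),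
          (hookU Y b * hookL Y b)) := by
    unfold jackNormSq
    rw [hsplit (fun b => hookU Y b * hookL Y b), hPc, hPr]
  -- telescoping
  have t1 := JackAux.tele (JackAux.ff (i, j)) Y.rowLen (fun k => hra k (k + 1) (by omega)) i
  rw [if_pos (show i = 0 ∨ Y.rowLen i < Y.rowLen (i - 1) by
    rcases hup with h | h
    · exact Or.inl h
    · exact Or.inr (by omega)), mul_one] at t1
  have t2 := JackAux.tele (fun p => JackAux.ff (i, j) (p.2, p.1)) Y.colLen
    (fun m => hca m (m + 1) (by omega)) j
  dsimp only at t2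
  rw [if_pos (show j = 0 ∨ Y.colLen j < Y.colLen (j - 1) by
    rcases hleft with h | h
    · exact Or.inl h
    · exact Or.inr (by omega)), mul_one] at t2
  -- corner-set product conversions
  have haddlt : ∀ G : ℕ × ℕ → Kf, ∏ a ∈ (addables Y).filter (fun a => a.1 < i), G a
      = ∏ k ∈ range i, if k = 0 ∨ Y.rowLen k < Y.rowLen (k - 1)
          then G (k, Y.rowLen k) else 1 := by
    intro G
    apply JackAux.prod_coords
    intro x
    rw [Finset.mem_filter, JackAux.mem_addables_row]
    constructor
    · rintro ⟨⟨h1, h2⟩, h3⟩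
      exact ⟨h3, h2, h1⟩
    · rintro ⟨h1, h2, h3⟩
      exact ⟨⟨h3, h2⟩, h1⟩
  have houtle : ∀ G : ℕ × ℕ → Kf, ∏ x ∈ (outers Y).filter (fun x => x.1 ≤ i), G x
      = ∏ k ∈ range i, if Y.rowLen (k + 1) < Y.rowLen k
          then G (k + 1, Y.rowLen k) else 1 := by
    intro G
    rw [JackAux.prod_coords G _ (fun k => 1 ≤ k ∧ Y.rowLen k < Y.rowLen (k - 1))
      (fun k => Y.rowLen (k - 1)) (i + 1) ?_]
    · rw [Finset.prod_range_succ']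
      simp only [Nat.add_sub_cancel]
      rw [if_neg (by omega), mul_one]
      apply Finset.prod_congr rfl
      intro k _
      exact if_congr (by omega) rfl rfl
    · intro x
      rw [Finset.mem_filter, JackAux.mem_outers_row]
      constructor
      · rintro ⟨⟨h1, h2, h3⟩, h4⟩
        exact ⟨by omega, ⟨h1, h3⟩, h2⟩
      · rintro ⟨h1, ⟨h2, h3⟩, h4⟩
        exact ⟨⟨h2, h4, h3⟩, by omega⟩
  have haddgt : ∀ G : ℕ × ℕ → Kf, ∏ a ∈ (addables Y).filter (fun a => a.2 < j), G a
      = ∏ m ∈ range j, if m = 0 ∨ Y.colLen m < Y.colLen (m - 1)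
          then G (Y.colLen m, m) else 1 := by
    intro G
    apply JackAux.prod_coords'
    intro x
    rw [Finset.mem_filter, JackAux.mem_addables_col]
    constructor
    · rintro ⟨⟨h1, h2⟩, h3⟩
      exact ⟨h3, h2, h1⟩
    · rintro ⟨h1, h2, h3⟩
      exact ⟨⟨h3, h2⟩, h1⟩
  have houtgt : ∀ G : ℕ × ℕ → Kf, ∏ x ∈ (outers Y).filter (fun x => x.2 ≤ j), G x
      = ∏ m ∈ range j, if Y.colLen (m + 1) < Y.colLen m
          then G (Y.colLen m, m + 1) else 1 := by
    intro G
    rw [JackAux.prod_coords' G _ (fun m => 1 ≤ m ∧ Y.colLen m < Y.colLen (m - 1))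
      (fun m => Y.colLen (m - 1)) (j + 1) ?_]
    · rw [Finset.prod_range_succ']
      simp only [Nat.add_sub_cancel]
      rw [if_neg (by omega), mul_one]
      apply Finset.prod_congr rfl
      intro m _
      exact if_congr (by omega) rfl rfl
    · intro x
      rw [Finset.mem_filter, JackAux.mem_outers_col]
      constructor
      · rintro ⟨⟨h1, h2, h3⟩, h4⟩
        exact ⟨by omega, ⟨h1, h3⟩, h2⟩
      · rintro ⟨h1, ⟨h2, h3⟩, h4⟩
        exact ⟨⟨h2, h4, h3⟩, by omega⟩
  -- partitioning the corner sets
  have fact_add : ∀ a ∈ addables Y, (a.1 < i ∧ j < a.2) ∨ a = (i, j) ∨ (i < a.1 ∧ a.2 < j) := by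
    intro a ha
    obtain ⟨h1, h2⟩ := JackAux.mem_addables_row.1 ha
    rcases lt_trichotomy a.1 i with h | h | h
    · left
      refine ⟨h, ?_⟩
      have h3 := hra a.1 (i - 1) (by omega)
      rcases hup with h0 | hlt
      · omega
      · omega
    · right; left
      have : a.2 = j := by rw [h1, h, hri]
      exact Prod.ext h this
    · right; right
      refine ⟨h, ?_⟩
      rcases h2 with h0 | hlt
      · omega
      · have := hra i (a.1 - 1) (by omega)
        omega
  have fact_out : ∀ x ∈ outers Y, (x.1 ≤ i ∧ j < x.2) ∨ (i < x.1 ∧ x.2 ≤ j) := by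
    intro x hx
    obtain ⟨h1, h2, h3⟩ := JackAux.mem_outers_row.1 hx
    rcases le_or_gt x.1 i with h | h
    · left
      refine ⟨h, ?_⟩
      have := hra (x.1 - 1) (i - 1) (by omega)
      rcases hup with h0 | hlt
      · omega
      · omega
    · right
      refine ⟨h, ?_⟩
      have := hra i (x.1 - 1) (by omega)
      omega
  have haddsplit : ∀ G : ℕ × ℕ → Kf, ∏ a ∈ (addables Y).erase (i, j), G a =
      (∏ a ∈ (addables Y).filter (fun a => a.1 < i), G a) *
        (∏ a ∈ (addables Y).filter (fun a => a.2 < j), G a) := by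
    intro G
    rw [← Finset.prod_filter_mul_prod_filter_not ((addables Y).erase (i, j))
      (fun a => a.1 < i) G]
    congr 1
    · apply Finset.prod_congr _ (fun _ _ => rfl)
      ext a
      simp only [Finset.mem_filter, Finset.mem_erase]
      constructor
      · rintro ⟨⟨h1, h2⟩, h3⟩
        exact ⟨h2, h3⟩
      · rintro ⟨h1, h2⟩
        refine ⟨⟨?_, h1⟩, h2⟩
        intro he
        rw [he] at h2
        omega
    · apply Finset.prod_congr _ (fun _ _ => rfl)
      ext a
      simp only [Finset.mem_filter, Finset.mem_erase]
      constructor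
      · rintro ⟨⟨h1, h2⟩, h3⟩
        refine ⟨h2, ?_⟩
        rcases fact_add a h2 with h | h | h
        · omega
        · exact absurd h h1
        · omega
      · rintro ⟨h1, h2⟩
        rcases fact_add a h1 with h | h | h
        · omega
        · rw [h] at h2
          omega
        · refine ⟨⟨?_, h1⟩, by omega⟩
          intro he
          rw [he] at h2
          omega
  have houtsplit : ∀ G : ℕ × ℕ → Kf, ∏ x ∈ outers Y, G x =
      (∏ x ∈ (outers Y).filter (fun x => x.1 ≤ i), G x) *
        (∏ x ∈ (outers Y).filter (fun x => x.2 ≤ j), G x) := by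
    intro G
    rw [← Finset.prod_filter_mul_prod_filter_not (outers Y) (fun x => x.1 ≤ i) G]
    congr 1
    apply Finset.prod_congr _ (fun _ _ => rfl)
    ext x
    simp only [Finset.mem_filter]
    constructor
    · rintro ⟨h1, h2⟩
      refine ⟨h1, ?_⟩
      rcases fact_out x h1 with h | h
      · omega
      · omega
    · rintro ⟨h1, h2⟩
      refine ⟨h1, ?_⟩
      rcases fact_out x h1 with h | h
      · omega
      · omega
  -- EQUATION I
  have eqI : jackNormSq Y' * ∏ x ∈ outers Y, JackAux.ff (i, j) x
      = -(eps1 * eps2) *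
        (jackNormSq Y * ∏ a ∈ (addables Y).erase (i, j), JackAux.ff (i, j) a) := by
    rw [hN', hN, houtsplit (JackAux.ff (i, j)), haddsplit (JackAux.ff (i, j)),
      houtle (JackAux.ff (i, j)), houtgt (JackAux.ff (i, j)),
      haddlt (JackAux.ff (i, j)), haddgt (JackAux.ff (i, j))]
    linear_combination (-(eps1 * eps2) *
        (∏ b ∈ (Y.cells.filter (fun b => ¬b.2 = j)).filter (fun b => ¬b.1 = i),
          (hookU Y b * hookL Y b)) *
        ((∏ m ∈ range j, JackAux.ff (i, j) (Y.colLen m, m)) *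
          (∏ m ∈ range j, if Y.colLen (m + 1) < Y.colLen m
            then JackAux.ff (i, j) (Y.colLen m, m + 1) else 1))) * t1 +
      (-(eps1 * eps2) *
        (∏ b ∈ (Y.cells.filter (fun b => ¬b.2 = j)).filter (fun b => ¬b.1 = i),
          (hookU Y b * hookL Y b)) *
        ((∏ k ∈ range i, JackAux.ff (i, j) (k + 1, Y.rowLen k)) *
          (∏ k ∈ range i, if k = 0 ∨ Y.rowLen k < Y.rowLen (k - 1)
            then JackAux.ff (i, j) (k, Y.rowLen k) else 1))) * t2
  -- EQUATION II setup
  set M := Y.colLen 0 + 2 with hM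
  have hiM : i < M := by
    have := hca 0 j (by omega)
    omega
  have hi1M : i + 1 < M := by
    have := hca 0 j (by omega)
    omega
  have hcY'0 : Y'.colLen 0 ≤ Y.colLen 0 + 1 := by
    rw [hcY' 0]
    by_cases h : (0 : ℕ) = j
    · rw [if_pos h]
      have : Y.colLen 0 = i := by rw [h, hcj]
      omega
    · rw [if_neg h]
      omega
  have cA' : ∏ a ∈ addables Y', JackAux.gg (i, j) a
      = ∏ k ∈ range M, if k = 0 ∨ Y'.rowLen k < Y'.rowLen (k - 1)
          then JackAux.gg (i, j) (k, Y'.rowLen k) else 1 := by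
    apply JackAux.prod_coords
    intro x
    constructor
    · intro hx
      have hb := JackAux.addable_row_le hx
      obtain ⟨h1, h2⟩ := JackAux.mem_addables_row.1 hx
      exact ⟨by omega, h2, h1⟩
    · rintro ⟨h1, h2, h3⟩
      exact JackAux.mem_addables_row.2 ⟨h3, h2⟩
  have cDt : ∏ x ∈ outers Y, JackAux.gg (i, j) x
      = ∏ k ∈ range M, if 1 ≤ k ∧ Y.rowLen k < Y.rowLen (k - 1)
          then JackAux.gg (i, j) (k, Y.rowLen (k - 1)) else 1 := by
    apply JackAux.prod_coords
    intro x
    constructor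
    · intro hx
      have hb := JackAux.outer_row_le hx
      obtain ⟨h1, h2, h3⟩ := JackAux.mem_outers_row.1 hx
      exact ⟨by omega, ⟨h1, h3⟩, h2⟩
    · rintro ⟨h1, ⟨h2, h3⟩, h4⟩
      exact JackAux.mem_outers_row.2 ⟨h2, h4, h3⟩
  have cCt : ∏ a ∈ (addables Y).erase (i, j), JackAux.gg (i, j) a
      = ∏ k ∈ range M, if (k = 0 ∨ Y.rowLen k < Y.rowLen (k - 1)) ∧ ¬k = i
          then JackAux.gg (i, j) (k, Y.rowLen k) else 1 := by
    apply JackAux.prod_coords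
    intro x
    rw [Finset.mem_erase]
    constructor
    · rintro ⟨hne, hx⟩
      have hb := JackAux.addable_row_le hx
      obtain ⟨h1, h2⟩ := JackAux.mem_addables_row.1 hx
      refine ⟨by omega, ⟨h2, ?_⟩, h1⟩
      intro he
      apply hne
      apply Prod.ext he
      rw [h1, he, hri]
    · rintro ⟨h1, ⟨h2, h3⟩, h4⟩
      refine ⟨?_, JackAux.mem_addables_row.2 ⟨h4, h2⟩⟩
      intro he
      exact h3 (congrArg Prod.fst he)
  have cB' : ∏ x ∈ (outers Y').erase (i + 1, j + 1), JackAux.gg (i, j) x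
      = ∏ k ∈ range M, if (1 ≤ k ∧ Y'.rowLen k < Y'.rowLen (k - 1)) ∧ ¬k = i + 1
          then JackAux.gg (i, j) (k, Y'.rowLen (k - 1)) else 1 := by
    apply JackAux.prod_coords
    intro x
    rw [Finset.mem_erase]
    constructor
    · rintro ⟨hne, hx⟩
      have hb := JackAux.outer_row_le hx
      obtain ⟨h1, h2, h3⟩ := JackAux.mem_outers_row.1 hx
      refine ⟨by omega, ⟨⟨h1, h3⟩, ?_⟩, h2⟩
      intro he
      apply hne
      apply Prod.ext he
      rw [h2, he]
      simp only [Nat.add_sub_cancel]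
      rw [hrY' i, if_pos rfl]
    · rintro ⟨h1, ⟨⟨h2, h3⟩, h4⟩, h5⟩
      refine ⟨?_, JackAux.mem_outers_row.2 ⟨h2, h5, h3⟩⟩
      intro he
      exact h4 (congrArg Prod.fst he)
  have cU : ∏ k ∈ range M, (if k = i then JackAux.gg (i, j) (i, j + 1) else 1) = eps1 := by
    rw [Finset.prod_ite_eq' (range M) i (fun _ => JackAux.gg (i, j) (i, j + 1)),
      if_pos (Finset.mem_range.2 hiM)]
    unfold JackAux.gg content
    dsimp only
    push_cast
    ring
  have cV : ∏ k ∈ range M, (if k = i + 1 then JackAux.gg (i, j) (i + 1, j) else 1) = eps2 := by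
    rw [Finset.prod_ite_eq' (range M) (i + 1) (fun _ => JackAux.gg (i, j) (i + 1, j)),
      if_pos (Finset.mem_range.2 hi1M)]
    unfold JackAux.gg content
    dsimp only
    push_cast
    ring
  -- EQUATION II
  have eqII : (∏ a ∈ addables Y', JackAux.gg (i, j) a) * (∏ x ∈ outers Y, JackAux.gg (i, j) x)
      = (eps1 * eps2) * ((∏ a ∈ (addables Y).erase (i, j), JackAux.gg (i, j) a) *
          (∏ x ∈ (outers Y').erase (i + 1, j + 1), JackAux.gg (i, j) x)) := by
    rw [cA', cDt, cCt, cB', ← cU, ← cV, ← Finset.prod_mul_distrib, ← Finset.prod_mul_distrib,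
      ← Finset.prod_mul_distrib, ← Finset.prod_mul_distrib]
    exact Finset.prod_congr rfl
      (fun k hk => JackAux.pointwise Y Y' i j M hrY' hri hra hup k (Finset.mem_range.1 hk))
  -- nonvanishing
  have hN0 : jackNormSq Y ≠ 0 := by
    unfold jackNormSq
    exact Finset.prod_ne_zero_iff.2
      (fun b _ => mul_ne_zero (JackAux.hookU_ne Y b) (JackAux.hookL_ne Y b))
  have hDs0 : (∏ x ∈ outers Y, (content (i, j) - content x)) ≠ 0 := by
    apply Finset.prod_ne_zero_iff.2
    intro x hx
    apply JackAux.content_sub_ne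
    intro he
    obtain ⟨h1, h2, h3⟩ := JackAux.mem_outers_row.1 hx
    rw [← he] at h1 h2 h3
    dsimp only at h1 h2 h3
    omega
  have hDt0 : (∏ x ∈ outers Y, JackAux.gg (i, j) x) ≠ 0 := by
    apply Finset.prod_ne_zero_iff.2
    intro x hx
    unfold JackAux.gg
    apply JackAux.content_sub_ne
    intro he
    obtain ⟨h1, h2, h3⟩ := JackAux.mem_outers_row.1 hx
    rw [← he] at h1 h2 h3
    dsimp only at h1 h2 h3
    have : Y.rowLen (i + 1 - 1) = Y.rowLen i := by norm_num
    rw [this, hri] at h2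
    omega
  have hB'0 : (∏ x ∈ (outers Y').erase (i + 1, j + 1), JackAux.gg (i, j) x) ≠ 0 := by
    apply Finset.prod_ne_zero_iff.2
    intro x hx
    unfold JackAux.gg
    apply JackAux.content_sub_ne
    intro he
    exact (Finset.mem_erase.1 hx).1 he.symm
  -- final assembly
  have hgg : ∀ S : Finset (ℕ × ℕ),
      ∏ x ∈ S, (content (i + 1, j + 1) - content x) = ∏ x ∈ S, JackAux.gg (i, j) x :=
    fun S => rfl
  have hff_out : ∏ x ∈ outers Y, JackAux.ff (i, j) x
      = (∏ x ∈ outers Y, (content (i, j) - content x)) * ∏ x ∈ outers Y, JackAux.gg (i, j) x :=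
    JackAux.prod_ff (i, j) (outers Y)
  have hff_add : ∏ a ∈ (addables Y).erase (i, j), JackAux.ff (i, j) a
      = (∏ a ∈ (addables Y).erase (i, j), (content (i, j) - content a)) *
        ∏ a ∈ (addables Y).erase (i, j), JackAux.gg (i, j) a :=
    JackAux.prod_ff (i, j) ((addables Y).erase (i, j))
  rw [hff_out, hff_add] at eqI
  rw [ttau, tau]
  have hdd : ∀ a b c d : Kf, (a / b) / (c / d) = (a * d) / (b * c) := by
    intros a b c d
    simp only [div_eq_mul_inv, mul_inv, inv_inv]
    ring
  rw [hdd, hgg (addables Y'), hgg ((outers Y').erase (i + 1, j + 1))]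
  rw [div_eq_div_iff hN0 (mul_ne_zero hB'0 hDs0)]
  apply mul_right_cancel₀ hDt0
  linear_combination (∏ x ∈ (outers Y').erase (i + 1, j + 1), JackAux.gg (i, j) x) * eqI +
    ((∏ a ∈ (addables Y).erase (i, j), (content (i, j) - content a)) * jackNormSq Y) * eqII

end
end
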